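/- arXiv:0904.2561 — 3 statements merged into one kernel-verified Lean document; each statement's English description precedes it below -/
import Mathlib

section
/- With e(x) = √(λ⁻²·cos²(x) + λ²·sin²(x)) and λ > 1, the derivative e′ has a unique critical point in (0, π/2), and it is a global maximum of e′ on [0, π/2]. -/
/-!
With `0 < α < β` (here `α = λ⁻¹`, `β = λ`) and `e x = √(α² cos² x + β² sin² x)`, one computes
`e'' = (β² - α²) (α - (α + β) sin² x) ((β - α) sin² x + α) / e³`,
so `e''` has the sign of `α / (α + β) - sin² x`. As `sin²` increases strictly from `0` to `1` on
`[0, π/2]`, `e'` increases strictly up to the unique `x₀` with `sin² x₀ = α / (α + β)` and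
decreases strictly after it.
-/

open Real Set

noncomputable def ellipseRadius (α β x : ℝ) : ℝ := √(α ^ 2 * cos x ^ 2 + β ^ 2 * sin x ^ 2)

lemma isMaxOn_of_deriv_pos_of_deriv_neg {g : ℝ → ℝ} {a b c : ℝ} (hg : ContinuousOn g (Icc a c))
    (hb : b ∈ Icc a c) (hpos : ∀ x ∈ Ioo a b, 0 < deriv g x)
    (hneg : ∀ x ∈ Ioo b c, deriv g x < 0) : IsMaxOn g (Icc a c) b := by
  have hmono : MonotoneOn g (Icc a b) :=
    (strictMonoOn_of_deriv_pos (convex_Icc a b) (hg.mono (Icc_subset_Icc_right hb.2))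
      (by simpa only [interior_Icc] using hpos)).monotoneOn
  have hanti : AntitoneOn g (Icc b c) :=
    (strictAntiOn_of_deriv_neg (convex_Icc b c) (hg.mono (Icc_subset_Icc_left hb.1))
      (by simpa only [interior_Icc] using hneg)).antitoneOn
  intro x hx
  rcases le_total x b with hxb | hbx
  · exact hmono ⟨hx.1, hxb⟩ ⟨hb.1, le_rfl⟩ hxb
  · exact hanti ⟨le_rfl, hb.2⟩ ⟨hbx, hx.2⟩ hbx

lemma strictMonoOn_sin_sq : StrictMonoOn (fun x ↦ sin x ^ 2) (Icc 0 (π / 2)) :=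
  fun x hx y hy hxy ↦ pow_lt_pow_left₀
    (strictMonoOn_sin ⟨by linarith [pi_pos, hx.1], hx.2⟩ ⟨by linarith [pi_pos, hy.1], hy.2⟩ hxy)
    (sin_nonneg_of_nonneg_of_le_pi hx.1 (by linarith [pi_pos, hx.2])) two_ne_zero

lemma exists_mem_Ioo_sin_sq_eq {s : ℝ} (h0 : 0 < s) (h1 : s < 1) :
    ∃ x ∈ Ioo 0 (π / 2), sin x ^ 2 = s := by
  have hs : √s < 1 := (sqrt_lt' one_pos).2 (by rwa [one_pow])
  refine ⟨arcsin √s, ⟨arcsin_pos.2 (sqrt_pos.2 h0), arcsin_lt_pi_div_two.2 hs⟩, ?_⟩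
  rw [sin_arcsin (by linarith [sqrt_nonneg s]) hs.le, sq_sqrt h0.le]

section

variable {α β : ℝ}

lemma ellipseRadius_sq_pos (hα : α ≠ 0) (hβ : β ≠ 0) (x : ℝ) :
    0 < α ^ 2 * cos x ^ 2 + β ^ 2 * sin x ^ 2 := by
  have hα2 : 0 < α ^ 2 := by positivity
  have hβ2 : 0 < β ^ 2 := by positivity
  nlinarith [sin_sq_add_cos_sq x, mul_pos hα2 hβ2, mul_nonneg hα2.le (sq_nonneg (cos x)),
    mul_nonneg hβ2.le (sq_nonneg (sin x))]

lemma ellipseRadius_pos (hα : α ≠ 0) (hβ : β ≠ 0) (x : ℝ) : 0 < ellipseRadius α β x :=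
  sqrt_pos.2 (ellipseRadius_sq_pos hα hβ x)

lemma ellipseRadius_sq (x : ℝ) : ellipseRadius α β x ^ 2 = α ^ 2 * cos x ^ 2 + β ^ 2 * sin x ^ 2 :=
  sq_sqrt (by positivity)

lemma hasDerivAt_ellipseRadius (hα : α ≠ 0) (hβ : β ≠ 0) (x : ℝ) :
    HasDerivAt (ellipseRadius α β) ((β ^ 2 - α ^ 2) * sin x * cos x / ellipseRadius α β x) x := by
  have hsq : HasDerivAt (fun x ↦ α ^ 2 * cos x ^ 2 + β ^ 2 * sin x ^ 2)
      (2 * ((β ^ 2 - α ^ 2) * sin x * cos x)) x :=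
    ((((hasDerivAt_cos x).pow 2).const_mul (α ^ 2)).add
      (((hasDerivAt_sin x).pow 2).const_mul (β ^ 2))).congr_deriv (by ring)
  refine (hsq.sqrt (ellipseRadius_sq_pos hα hβ x).ne').congr_deriv ?_
  rw [ellipseRadius]
  ring

lemma deriv_ellipseRadius (hα : α ≠ 0) (hβ : β ≠ 0) :
    deriv (ellipseRadius α β) = fun x ↦ (β ^ 2 - α ^ 2) * sin x * cos x / ellipseRadius α β x :=
  funext fun x ↦ (hasDerivAt_ellipseRadius hα hβ x).deriv

lemma hasDerivAt_deriv_ellipseRadius (hα : α ≠ 0) (hβ : β ≠ 0) (x : ℝ) :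
    HasDerivAt (deriv (ellipseRadius α β))
      ((β ^ 2 - α ^ 2) * (α - (α + β) * sin x ^ 2) * ((β - α) * sin x ^ 2 + α)
        / ellipseRadius α β x ^ 3) x := by
  rw [deriv_ellipseRadius hα hβ]
  have hnum : HasDerivAt (fun x ↦ (β ^ 2 - α ^ 2) * sin x * cos x)
      ((β ^ 2 - α ^ 2) * (cos x ^ 2 - sin x ^ 2)) x :=
    (((hasDerivAt_sin x).const_mul (β ^ 2 - α ^ 2)).mul (hasDerivAt_cos x)).congr_deriv (by ring)
  have he := (ellipseRadius_pos hα hβ x).ne'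
  refine (hnum.div (hasDerivAt_ellipseRadius hα hβ x) he).congr_deriv ?_
  field_simp
  rw [ellipseRadius_sq, cos_sq']
  ring

lemma sign_deriv_deriv_ellipseRadius (hα : 0 < α) (hαβ : α < β) (x : ℝ) :
    SignType.sign (deriv (deriv (ellipseRadius α β)) x) =
      SignType.sign (α / (α + β) - sin x ^ 2) := by
  have hβ : 0 < β := hα.trans hαβ
  have he := ellipseRadius_pos hα.ne' hβ.ne' x
  have hK :
      0 < (β ^ 2 - α ^ 2) * (α + β) * ((β - α) * sin x ^ 2 + α) / ellipseRadius α β x ^ 3 := by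
    have : 0 < β ^ 2 - α ^ 2 := by nlinarith
    have : 0 < β - α := by linarith
    positivity
  rw [(hasDerivAt_deriv_ellipseRadius hα.ne' hβ.ne' x).deriv, ← mul_one (SignType.sign (_ - _)),
    ← sign_pos hK, ← sign_mul]
  congr 1
  field_simp

end

/-- With `e(x) = √(λ⁻² cos²x + λ² sin²x)`, `λ > 1`, the derivative `e′` has a
unique critical point (zero of `e″`) in `(0, π/2)`, and it is a global maximum of `e′` on
`[0, π/2]`. -/
theorem stmt_3 (L : ℝ) (hL : 1 < L) :
    ∃ x₀ ∈ Set.Ioo (0 : ℝ) (Real.pi / 2),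
      deriv (deriv (fun x => Real.sqrt (L⁻¹ ^ 2 * Real.cos x ^ 2 + L ^ 2 * Real.sin x ^ 2))) x₀
          = 0 ∧
      (∀ x ∈ Set.Ioo (0 : ℝ) (Real.pi / 2),
        deriv (deriv (fun x => Real.sqrt (L⁻¹ ^ 2 * Real.cos x ^ 2 + L ^ 2 * Real.sin x ^ 2))) x
            = 0 → x = x₀) ∧
      (∀ x ∈ Set.Icc (0 : ℝ) (Real.pi / 2),
        deriv (fun x => Real.sqrt (L⁻¹ ^ 2 * Real.cos x ^ 2 + L ^ 2 * Real.sin x ^ 2)) x ≤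
        deriv (fun x => Real.sqrt (L⁻¹ ^ 2 * Real.cos x ^ 2 + L ^ 2 * Real.sin x ^ 2)) x₀) := by
  change ∃ x₀ ∈ Ioo 0 (π / 2), deriv (deriv (ellipseRadius L⁻¹ L)) x₀ = 0 ∧
    (∀ x ∈ Ioo 0 (π / 2), deriv (deriv (ellipseRadius L⁻¹ L)) x = 0 → x = x₀) ∧
    ∀ x ∈ Icc 0 (π / 2), deriv (ellipseRadius L⁻¹ L) x ≤ deriv (ellipseRadius L⁻¹ L) x₀
  have hα : 0 < L⁻¹ := by positivity
  have hαβ : L⁻¹ < L := (inv_lt_one_of_one_lt₀ hL).trans hL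
  have hsign := sign_deriv_deriv_ellipseRadius hα hαβ
  obtain ⟨x₀, hx₀, hsin⟩ := exists_mem_Ioo_sin_sq_eq (s := L⁻¹ / (L⁻¹ + L))
    (by positivity) ((div_lt_one (by positivity)).2 (by linarith))
  rw [← hsin] at hsign
  have hx₀' : x₀ ∈ Icc 0 (π / 2) := Ioo_subset_Icc_self hx₀
  refine ⟨x₀, hx₀, ?_, fun x hx hx0 ↦ ?_, ?_⟩
  · simpa using hsign x₀
  · rw [← _root_.sign_eq_zero_iff, hsign, _root_.sign_eq_zero_iff, sub_eq_zero] at hx0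
    exact strictMonoOn_sin_sq.injOn (Ioo_subset_Icc_self hx) hx₀' hx0.symm
  refine isMaxOn_of_deriv_pos_of_deriv_neg (fun x _ ↦ ?_) hx₀' (fun x hx ↦ ?_) (fun x hx ↦ ?_)
  · exact (hasDerivAt_deriv_ellipseRadius hα.ne' (hα.trans hαβ).ne' x).continuousAt
      |>.continuousWithinAt
  · have hlt := strictMonoOn_sin_sq ⟨hx.1.le, (hx.2.trans hx₀.2).le⟩ hx₀' hx.2
    rw [← _root_.sign_eq_one_iff, hsign, _root_.sign_eq_one_iff]
    exact sub_pos.2 hlt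
  · have hlt := strictMonoOn_sin_sq hx₀' ⟨(hx₀.1.trans hx.1).le, hx.2.le⟩ hx.1
    rw [← _root_.sign_eq_neg_one_iff, hsign, _root_.sign_eq_neg_one_iff]
    exact sub_neg.2 hlt
end

section
/- The maps Ψ(x,y) = (tan x, y·cos x) and Φ(u,v) = (arctan u, v·√(1+u²)) are mutually inverse diffeomorphisms between (−π/2, π/2) × ℝ and ℝ², and they conjugate F(x,y) = (arctan(λ²·tan x), y·√(λ⁻²cos²x + λ²sin²x)) to the linear map L₀(u,v) = (λ²u, λ⁻¹v); that is, Ψ ∘ F = L₀ ∘ Ψ. -/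
open Real Set

lemma aux_sqrt (x : ℝ) : Real.sqrt (1 + x ^ 2) ≠ 0 := by
  positivity

/-- `Ψ(x,y) = (tan x, y cos x)` and `Φ(u,v) = (arctan u, v √(1+u²))` are mutually
inverse diffeomorphisms between `(−π/2, π/2) × ℝ` and `ℝ²`, and they conjugate
`F(x,y) = (arctan(λ² tan x), y √(λ⁻² cos²x + λ² sin²x))` to `L₀(u,v) = (λ²u, λ⁻¹v)`:
`Ψ ∘ F = L₀ ∘ Ψ`. -/
theorem stmt_14 (L : ℝ) (hL : 1 < L)
    (Ψ Φ F L₀ : ℝ × ℝ → ℝ × ℝ)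
    (hΨ : ∀ p : ℝ × ℝ, Ψ p = (Real.tan p.1, p.2 * Real.cos p.1))
    (hΦ : ∀ p : ℝ × ℝ, Φ p = (Real.arctan p.1, p.2 * Real.sqrt (1 + p.1 ^ 2)))
    (hF : ∀ p : ℝ × ℝ, F p = (Real.arctan (L ^ 2 * Real.tan p.1),
      p.2 * Real.sqrt (L⁻¹ ^ 2 * Real.cos p.1 ^ 2 + L ^ 2 * Real.sin p.1 ^ 2)))
    (hL0 : ∀ p : ℝ × ℝ, L₀ p = (L ^ 2 * p.1, L⁻¹ * p.2)) :
    (∀ p : ℝ × ℝ, p.1 ∈ Set.Ioo (-(Real.pi / 2)) (Real.pi / 2) → Φ (Ψ p) = p) ∧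
    (∀ p : ℝ × ℝ, Ψ (Φ p) = p ∧ (Φ p).1 ∈ Set.Ioo (-(Real.pi / 2)) (Real.pi / 2)) ∧
    ContDiff ℝ (⊤ : ℕ∞) Φ ∧
    ContDiffOn ℝ (⊤ : ℕ∞) Ψ (Set.Ioo (-(Real.pi / 2)) (Real.pi / 2) ×ˢ (Set.univ : Set ℝ)) ∧
    (∀ p : ℝ × ℝ, p.1 ∈ Set.Ioo (-(Real.pi / 2)) (Real.pi / 2) → Ψ (F p) = L₀ (Ψ p)) := by
  have hL0' : (0:ℝ) < L := lt_trans zero_lt_one hL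
  refine ⟨?_, ?_, ?_, ?_, ?_⟩
  · rintro ⟨x, y⟩ hx
    have hc : 0 < Real.cos x := Real.cos_pos_of_mem_Ioo hx
    rw [hΨ, hΦ]
    simp only
    refine Prod.ext ?_ ?_
    · exact Real.arctan_tan hx.1 hx.2
    · show y * Real.cos x * Real.sqrt (1 + Real.tan x ^ 2) = y
      rw [show (1 + Real.tan x ^ 2) = (Real.cos x ^ 2)⁻¹ by
        rw [← Real.inv_one_add_tan_sq hc.ne', inv_inv]]
      rw [Real.sqrt_inv, Real.sqrt_sq hc.le]
      field_simp
  · rintro ⟨u, v⟩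
    rw [hΦ, hΨ]
    refine ⟨?_, Real.arctan_mem_Ioo u⟩
    simp only
    refine Prod.ext ?_ ?_
    · exact Real.tan_arctan u
    · show v * Real.sqrt (1 + u ^ 2) * Real.cos (Real.arctan u) = v
      rw [Real.cos_arctan]
      field_simp [aux_sqrt u]
  · have : Φ = fun p : ℝ × ℝ => (Real.arctan p.1, p.2 * Real.sqrt (1 + p.1 ^ 2)) :=
      funext hΦ
    rw [this]
    refine ContDiff.prodMk ?_ ?_
    · exact Real.contDiff_arctan.comp contDiff_fst
    · exact contDiff_snd.mul ((contDiff_const.add (contDiff_fst.pow 2)).sqrt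
        (fun p => by positivity))
  · have : Ψ = fun p : ℝ × ℝ => (Real.tan p.1, p.2 * Real.cos p.1) := funext hΨ
    rw [this]
    intro p hp
    have hc : Real.cos p.1 ≠ 0 := (Real.cos_pos_of_mem_Ioo hp.1).ne'
    refine ContDiffAt.contDiffWithinAt ?_
    refine ContDiffAt.prodMk ?_ ?_
    · exact (Real.contDiffAt_tan.mpr hc).comp p contDiffAt_fst
    · exact contDiffAt_snd.mul ((Real.contDiff_cos.contDiffAt).comp p contDiffAt_fst)
  · rintro ⟨x, y⟩ hx
    have hc : 0 < Real.cos x := Real.cos_pos_of_mem_Ioo hx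
    rw [hF, hΨ, hΨ, hL0]
    simp only
    refine Prod.ext ?_ ?_
    · exact Real.tan_arctan _
    · show y * Real.sqrt (L⁻¹ ^ 2 * Real.cos x ^ 2 + L ^ 2 * Real.sin x ^ 2) *
        Real.cos (Real.arctan (L ^ 2 * Real.tan x)) = L⁻¹ * (y * Real.cos x)
      rw [Real.cos_arctan]
      have key : Real.sqrt (L⁻¹ ^ 2 * Real.cos x ^ 2 + L ^ 2 * Real.sin x ^ 2)
          = L⁻¹ * Real.cos x * Real.sqrt (1 + (L ^ 2 * Real.tan x) ^ 2) := by
        rw [← Real.sqrt_sq (by positivity : (0:ℝ) ≤ L⁻¹ * Real.cos x),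
          ← Real.sqrt_mul (by positivity)]
        congr 1
        rw [Real.tan_eq_sin_div_cos]
        field_simp
      rw [key]
      have hs := aux_sqrt (L ^ 2 * Real.tan x)
      field_simp
end

section
/- Let F(x,y) = (h(x), y·e(x)) with λ > 1 as above, and let v = (v₁, v₂) with v₁ > 0 and slope sl(v) = v₂/v₁ > 0. For any (x,y) with y > 0 and x ∈ (0, π/2), the image vector w = DF(x,y)·v = (h′(x)v₁, y·e′(x)v₁ + e(x)v₂) satisfies sl(w) ≥ sl(v)/λ³ > 0, provided y·e′(x) ≥ 0. In particular, positive slope is preserved by the derivative, losing at most a factor λ³ per iteration. -/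
/-!
Since `0 < h′(x) ≤ λ²`, `e(x) ≥ λ⁻¹` and the term `y e′(x) v₁` is nonnegative, the slope of the
image is at least `λ⁻¹ v₂ / (λ² v₁) = sl(v) / λ³`.
-/

noncomputable def hmap (L x : ℝ) : ℝ := Real.arctan (L ^ 2 * Real.tan x)

noncomputable def emap (L x : ℝ) : ℝ :=
  Real.sqrt (L⁻¹ ^ 2 * Real.cos x ^ 2 + L ^ 2 * Real.sin x ^ 2)

open Real

theorem hasDerivAt_hmap (L : ℝ) {x : ℝ} (hx : cos x ≠ 0) :
    HasDerivAt (hmap L) (L ^ 2 / (cos x ^ 2 + L ^ 4 * sin x ^ 2)) x := by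
  refine ((hasDerivAt_arctan _).comp x ((hasDerivAt_tan hx).const_mul (L ^ 2))).congr_deriv ?_
  rw [tan_eq_sin_div_cos]
  field_simp

theorem deriv_hmap_pos {L x : ℝ} (hL : L ≠ 0) (hx : cos x ≠ 0) : 0 < deriv (hmap L) x := by
  rw [(hasDerivAt_hmap L hx).deriv]
  positivity

theorem deriv_hmap_le {L x : ℝ} (hL : 1 ≤ L) (hx : cos x ≠ 0) : deriv (hmap L) x ≤ L ^ 2 := by
  rw [(hasDerivAt_hmap L hx).deriv]
  refine div_le_self (by positivity) ?_
  have hL4 : 1 ≤ L ^ 4 := one_le_pow₀ hL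
  nlinarith [sin_sq_add_cos_sq x, sq_nonneg (sin x)]

theorem inv_le_emap {L : ℝ} (hL : 1 ≤ L) (x : ℝ) : L⁻¹ ≤ emap L x := by
  have hLinv : L⁻¹ ^ 2 ≤ L ^ 2 := by
    gcongr
    exact (inv_le_one_of_one_le₀ hL).trans hL
  rw [emap, le_sqrt' (by positivity)]
  nlinarith [sin_sq_add_cos_sq x, sq_nonneg (sin x)]

theorem div_pow_three_le_slope {L D e a v₁ v₂ : ℝ} (hL : 0 < L) (hD : 0 < D) (hDL : D ≤ L ^ 2)
    (he : L⁻¹ ≤ e) (ha : 0 ≤ a) (hv₁ : 0 < v₁) (hv₂ : 0 < v₂) :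
    (v₂ / v₁) / L ^ 3 ≤ (a * v₁ + e * v₂) / (D * v₁) := by
  have hnum : L⁻¹ * v₂ ≤ a * v₁ + e * v₂ := by nlinarith [mul_le_mul_of_nonneg_right he hv₂.le]
  calc (v₂ / v₁) / L ^ 3 = (L⁻¹ * v₂) / (L ^ 2 * v₁) := by field_simp
    _ ≤ (a * v₁ + e * v₂) / (D * v₁) :=
      div_le_div₀ (hnum.trans' (by positivity)) hnum (by positivity) (by gcongr)

theorem stmt_16_general (L : ℝ) (hL : 1 < L) (x y v₁ v₂ : ℝ)
    (hx : x ∈ Set.Ioo (0 : ℝ) (Real.pi / 2))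
    (hv1 : 0 < v₁) (hsl : 0 < v₂ / v₁)
    (hpos : 0 ≤ y * deriv (emap L) x) :
    (v₂ / v₁) / L ^ 3 ≤
      (y * deriv (emap L) x * v₁ + emap L x * v₂) / (deriv (hmap L) x * v₁) ∧
    0 < (y * deriv (emap L) x * v₁ + emap L x * v₂) / (deriv (hmap L) x * v₁) := by
  have hL₀ : 0 < L := one_pos.trans hL
  have hcos : cos x ≠ 0 := (cos_pos_of_mem_Ioo ⟨by linarith [pi_pos, hx.1], hx.2⟩).ne'
  have hv₂ : 0 < v₂ := (div_pos_iff_of_pos_right hv1).mp hsl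
  have hD := deriv_hmap_pos hL₀.ne' hcos
  have he := inv_le_emap hL.le x
  have hnum : 0 < y * deriv (emap L) x * v₁ + emap L x * v₂ :=
    add_pos_of_nonneg_of_pos (mul_nonneg hpos hv1.le)
      (mul_pos ((inv_pos.2 hL₀).trans_le he) hv₂)
  exact ⟨div_pow_three_le_slope hL₀ hD (deriv_hmap_le hL.le hcos) he hpos hv1 hv₂,
    div_pos hnum (mul_pos hD hv1)⟩

/-- For `F(x,y) = (h(x), y e(x))`, `λ > 1`, a vector `v = (v₁,v₂)` with `v₁ > 0`
and `sl(v) = v₂/v₁ > 0`, a point `(x,y)` with `x ∈ (0, π/2)`, `y > 0` and `y e′(x) ≥ 0`, the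
image vector `w = DF(x,y) v = (h′(x)v₁, y e′(x)v₁ + e(x)v₂)` satisfies
`sl(w) ≥ sl(v)/λ³ > 0`. -/
theorem stmt_16 (L : ℝ) (hL : 1 < L) (x y v₁ v₂ : ℝ)
    (hx : x ∈ Set.Ioo (0 : ℝ) (Real.pi / 2)) (hy : 0 < y)
    (hv1 : 0 < v₁) (hsl : 0 < v₂ / v₁)
    (hpos : 0 ≤ y * deriv (emap L) x) :
    (v₂ / v₁) / L ^ 3 ≤
      (y * deriv (emap L) x * v₁ + emap L x * v₂) / (deriv (hmap L) x * v₁) ∧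
    0 < (y * deriv (emap L) x * v₁ + emap L x * v₂) / (deriv (hmap L) x * v₁) :=
  stmt_16_general L hL x y v₁ v₂ hx hv1 hsl hpos
end
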